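/- arXiv:1509.09220 — 5 statements merged into one kernel-verified Lean document; each statement's English description precedes it below -/
import Mathlib

section
/- The quotient of the free abelian group ℤ⁴ by the subgroup generated by the vectors (1,−1,−1,−1), (0,0,0,1), (1,−3,0,0), (1,0,−3,0) and (1,0,0,−3) is isomorphic, as an abelian group, to ℤ/3ℤ. (Consequently the Mordell–Weil group of the degree-three del Pezzo elliptic fibration of type X_{SSS} is ℤ/3ℤ, as asserted in Theorem A.) -/
/-- The quotient of ℤ⁴ by the subgroup generated by (1,−1,−1,−1), (0,0,0,1),
(1,−3,0,0), (1,0,−3,0) and (1,0,0,−3) is isomorphic to ℤ/3ℤ.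
(Mordell–Weil group of the degree-three del Pezzo elliptic fibration of
type X_{SSS}.) -/
theorem mw_XSSS :
    Nonempty (((Fin 4 → ℤ) ⧸ AddSubgroup.closure
      ({![1,-1,-1,-1], ![0,0,0,1], ![1,-3,0,0], ![1,0,-3,0], ![1,0,0,-3]} :
        Set (Fin 4 → ℤ))) ≃+ ZMod 3) := by
  set S : Set (Fin 4 → ℤ) :=
    {![1,-1,-1,-1], ![0,0,0,1], ![1,-3,0,0], ![1,0,-3,0], ![1,0,0,-3]} with hS
  let f : (Fin 4 → ℤ) →+ ZMod 3 :=
    { toFun := fun v => ((v 1 - v 2 : ℤ) : ZMod 3)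
      map_zero' := by simp
      map_add' := by
        intro a b
        simp only [Pi.add_apply]
        push_cast
        ring }
  have hfv : ∀ v : Fin 4 → ℤ, f v = ((v 1 - v 2 : ℤ) : ZMod 3) := fun _ => rfl
  have hsurj : Function.Surjective f := by
    intro z
    obtain ⟨n, hn⟩ := ZMod.intCast_surjective (n := 3) z
    refine ⟨![0, n, 0, 0], ?_⟩
    simp [hfv, hn]
  have hker : AddSubgroup.closure S = f.ker := by
    apply le_antisymm
    · rw [AddSubgroup.closure_le]
      intro x hx
      simp only [hS, Set.mem_insert_iff, Set.mem_singleton_iff] at hx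
      rcases hx with h | h | h | h | h <;> subst h <;>
        simp [AddMonoidHom.mem_ker, hfv] <;> decide
    · intro v hv
      rw [AddMonoidHom.mem_ker, hfv] at hv
      obtain ⟨k, hk⟩ := (ZMod.intCast_zmod_eq_zero_iff_dvd _ 3).mp hv
      have h0 : (![1,-1,-1,-1] : Fin 4 → ℤ) ∈ AddSubgroup.closure S :=
        AddSubgroup.subset_closure (by simp [hS])
      have h1 : (![0,0,0,1] : Fin 4 → ℤ) ∈ AddSubgroup.closure S :=
        AddSubgroup.subset_closure (by simp [hS])
      have h3 : (![1,0,-3,0] : Fin 4 → ℤ) ∈ AddSubgroup.closure S :=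
        AddSubgroup.subset_closure (by simp [hS])
      have h4 : (![1,0,0,-3] : Fin 4 → ℤ) ∈ AddSubgroup.closure S :=
        AddSubgroup.subset_closure (by simp [hS])
      have hv_eq : v = (-(v 1)) • (![1,-1,-1,-1] : Fin 4 → ℤ)
          + (3 * v 0 + v 1 + v 2 + v 3) • (![0,0,0,1] : Fin 4 → ℤ)
          + k • (![1,0,-3,0] : Fin 4 → ℤ)
          + (v 0 + v 1 - k) • (![1,0,0,-3] : Fin 4 → ℤ) := by
        funext i
        fin_cases i <;>
          simp [Pi.add_apply, Pi.smul_apply, smul_eq_mul] <;> omega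
      rw [hv_eq]
      exact AddSubgroup.add_mem _
        (AddSubgroup.add_mem _
          (AddSubgroup.add_mem _ (AddSubgroup.zsmul_mem _ h0 _)
            (AddSubgroup.zsmul_mem _ h1 _))
          (AddSubgroup.zsmul_mem _ h3 _))
        (AddSubgroup.zsmul_mem _ h4 _)
  exact ⟨(QuotientAddGroup.quotientAddEquivOfEq hker).trans
    (QuotientAddGroup.quotientKerEquivOfSurjective f hsurj)⟩
end

section
/- The quotient of the free abelian group ℤ⁵ by the subgroup generated by the vectors (1,−1,−1,−1,−1), (0,0,0,0,1), (1,−2,−2,0,0), (1,0,0,−2,−2), (1,−2,0,−2,0) and (1,0,−2,0,−2) is isomorphic, as an abelian group, to ℤ ⊕ ℤ/2ℤ. (Consequently the Mordell–Weil group of the degree-four del Pezzo elliptic fibration of type X_{42} is ℤ ⊕ ℤ/2ℤ, as asserted in Theorem A.) -/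
private def phi : (Fin 5 → ℤ) →+ ℤ × ZMod 2 where
  toFun x := (2 * x 0 + x 2 + x 3, ((x 1 + x 2 : ℤ) : ZMod 2))
  map_zero' := by simp
  map_add' x y := by
    simp only [Pi.add_apply, Prod.mk_add_mk, Prod.mk.injEq]
    constructor
    · ring
    · push_cast; ring

/-- The quotient of ℤ⁵ by the subgroup generated by (1,−1,−1,−1,−1),
(0,0,0,0,1), (1,−2,−2,0,0), (1,0,0,−2,−2), (1,−2,0,−2,0) and (1,0,−2,0,−2)
is isomorphic to ℤ ⊕ ℤ/2ℤ.
(Mordell–Weil group of the degree-four del Pezzo elliptic fibration of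
type X_{42}.) -/
theorem mw_X42 :
    Nonempty (((Fin 5 → ℤ) ⧸ AddSubgroup.closure
      ({![1,-1,-1,-1,-1], ![0,0,0,0,1], ![1,-2,-2,0,0], ![1,0,0,-2,-2],
        ![1,-2,0,-2,0], ![1,0,-2,0,-2]} : Set (Fin 5 → ℤ)))
      ≃+ (ℤ × ZMod 2)) := by
  have hsurj : Function.Surjective phi := by
    rintro ⟨n, m⟩
    refine ⟨![0, 0, (m.val : ℤ), n - (m.val : ℤ), 0], ?_⟩
    simp only [phi, AddMonoidHom.coe_mk, ZeroHom.coe_mk]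
    ext
    · show 2 * 0 + (m.val : ℤ) + (n - (m.val : ℤ)) = n
      ring
    · show (((0 : ℤ) + (m.val : ℤ) : ℤ) : ZMod 2) = m
      push_cast
      simp [ZMod.natCast_val, ZMod.cast_id]
  have hker : AddSubgroup.closure
      ({![1,-1,-1,-1,-1], ![0,0,0,0,1], ![1,-2,-2,0,0], ![1,0,0,-2,-2],
        ![1,-2,0,-2,0], ![1,0,-2,0,-2]} : Set (Fin 5 → ℤ)) = phi.ker := by
    apply le_antisymm
    · rw [AddSubgroup.closure_le]
      rintro v hv
      simp only [Set.mem_insert_iff, Set.mem_singleton_iff] at hv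
      rcases hv with h | h | h | h | h | h <;> subst h <;>
        · show phi _ = 0
          decide
    · intro x hx
      have hx' : phi x = 0 := hx
      rw [Prod.ext_iff] at hx'
      obtain ⟨h1, h2⟩ := hx'
      simp only [phi, AddMonoidHom.coe_mk, ZeroHom.coe_mk, Prod.fst_zero,
        Prod.snd_zero] at h1 h2
      have h2' : (2 : ℤ) ∣ x 1 + x 2 := by
        rwa [ZMod.intCast_zmod_eq_zero_iff_dvd] at h2
      obtain ⟨t, ht⟩ := h2'
      -- k = (x 2 - x 1)/2 = t - x 1
      set k : ℤ := t - x 1 with hk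
      have hv1 : (![1,-1,-1,-1,-1] : Fin 5 → ℤ) ∈ AddSubgroup.closure
          ({![1,-1,-1,-1,-1], ![0,0,0,0,1], ![1,-2,-2,0,0], ![1,0,0,-2,-2],
            ![1,-2,0,-2,0], ![1,0,-2,0,-2]} : Set (Fin 5 → ℤ)) :=
        AddSubgroup.subset_closure (by simp)
      have hv2 : (![0,0,0,0,1] : Fin 5 → ℤ) ∈ AddSubgroup.closure
          ({![1,-1,-1,-1,-1], ![0,0,0,0,1], ![1,-2,-2,0,0], ![1,0,0,-2,-2],
            ![1,-2,0,-2,0], ![1,0,-2,0,-2]} : Set (Fin 5 → ℤ)) :=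
        AddSubgroup.subset_closure (by simp)
      have hv3 : (![1,-2,-2,0,0] : Fin 5 → ℤ) ∈ AddSubgroup.closure
          ({![1,-1,-1,-1,-1], ![0,0,0,0,1], ![1,-2,-2,0,0], ![1,0,0,-2,-2],
            ![1,-2,0,-2,0], ![1,0,-2,0,-2]} : Set (Fin 5 → ℤ)) :=
        AddSubgroup.subset_closure (by simp)
      have hv5 : (![1,-2,0,-2,0] : Fin 5 → ℤ) ∈ AddSubgroup.closure
          ({![1,-1,-1,-1,-1], ![0,0,0,0,1], ![1,-2,-2,0,0], ![1,0,0,-2,-2],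
            ![1,-2,0,-2,0], ![1,0,-2,0,-2]} : Set (Fin 5 → ℤ)) :=
        AddSubgroup.subset_closure (by simp)
      have hxeq : x = (2 * x 0 + x 1) • (![1,-1,-1,-1,-1] : Fin 5 → ℤ)
          + (x 4 + 2 * x 0 + x 1) • (![0,0,0,0,1] : Fin 5 → ℤ)
          + (-(x 0 + x 1) - k) • (![1,-2,-2,0,0] : Fin 5 → ℤ)
          + k • (![1,-2,0,-2,0] : Fin 5 → ℤ) := by
        funext i
        have hx3 : x 2 = x 1 + 2 * k := by omega
        have hx4 : x 3 = -(2 * x 0) - x 2 := by omega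
        fin_cases i <;> simp <;> omega
      rw [hxeq]
      exact AddSubgroup.add_mem _ (AddSubgroup.add_mem _ (AddSubgroup.add_mem _
        (AddSubgroup.zsmul_mem _ hv1 _) (AddSubgroup.zsmul_mem _ hv2 _))
        (AddSubgroup.zsmul_mem _ hv3 _)) (AddSubgroup.zsmul_mem _ hv5 _)
  rw [hker]
  exact ⟨QuotientAddGroup.quotientKerEquivOfSurjective phi hsurj⟩
end

section
/- The quotient of the free abelian group ℤ⁵ by the subgroup generated by the vectors (1,−1,−1,−1,−1), (0,0,0,0,1), (1,−2,−2,0,0), (1,0,0,−2,−2), (0,1,−1,0,0) and (1,−2,0,−1,−1) is isomorphic, as an abelian group, to ℤ. (Consequently the Mordell–Weil group of the degree-four del Pezzo elliptic fibration of type X_{31} is ℤ, as asserted in Theorem A.) -/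
private def phiX31 : (Fin 5 → ℤ) →+ ℤ :=
  AddMonoidHom.mk' (fun x => 4 * x 0 + x 1 + x 2 + 2 * x 3) (by
    intro a b; simp [Pi.add_apply]; ring)

/-- The quotient of ℤ⁵ by the subgroup generated by (1,−1,−1,−1,−1),
(0,0,0,0,1), (1,−2,−2,0,0), (1,0,0,−2,−2), (0,1,−1,0,0) and (1,−2,0,−1,−1)
is isomorphic to ℤ.
(Mordell–Weil group of the degree-four del Pezzo elliptic fibration of
type X_{31}.) -/
theorem mw_X31 :
    Nonempty (((Fin 5 → ℤ) ⧸ AddSubgroup.closure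
      ({![1,-1,-1,-1,-1], ![0,0,0,0,1], ![1,-2,-2,0,0], ![1,0,0,-2,-2],
        ![0,1,-1,0,0], ![1,-2,0,-1,-1]} : Set (Fin 5 → ℤ))) ≃+ ℤ) := by
  set S : Set (Fin 5 → ℤ) :=
    {![1,-1,-1,-1,-1], ![0,0,0,0,1], ![1,-2,-2,0,0], ![1,0,0,-2,-2],
      ![0,1,-1,0,0], ![1,-2,0,-1,-1]} with hS
  have hker : AddSubgroup.closure S = phiX31.ker := by
    apply le_antisymm
    · rw [AddSubgroup.closure_le]
      intro v hv
      simp only [hS, Set.mem_insert_iff, Set.mem_singleton_iff] at hv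
      rcases hv with h|h|h|h|h|h <;> subst h <;>
        simp [AddMonoidHom.mem_ker, phiX31]
    · intro x hx
      simp only [AddMonoidHom.mem_ker, phiX31, AddMonoidHom.mk'_apply] at hx
      have hv2 : (![0,0,0,0,1] : Fin 5 → ℤ) ∈ AddSubgroup.closure S :=
        AddSubgroup.subset_closure (by simp [hS])
      have hv3 : (![1,-2,-2,0,0] : Fin 5 → ℤ) ∈ AddSubgroup.closure S :=
        AddSubgroup.subset_closure (by simp [hS])
      have hv5 : (![0,1,-1,0,0] : Fin 5 → ℤ) ∈ AddSubgroup.closure S :=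
        AddSubgroup.subset_closure (by simp [hS])
      have hv6 : (![1,-2,0,-1,-1] : Fin 5 → ℤ) ∈ AddSubgroup.closure S :=
        AddSubgroup.subset_closure (by simp [hS])
      have hexpr : x = (x 0 + x 3) • (![1,-2,-2,0,0] : Fin 5 → ℤ)
          + (x 1 + 2 * x 0) • (![0,1,-1,0,0] : Fin 5 → ℤ)
          + (-(x 3)) • (![1,-2,0,-1,-1] : Fin 5 → ℤ)
          + (x 4 - x 3) • (![0,0,0,0,1] : Fin 5 → ℤ) := by
        funext i
        fin_cases i <;>
          simp [Pi.add_apply, Pi.smul_apply, smul_eq_mul] <;> omega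
      rw [hexpr]
      exact AddSubgroup.add_mem _
        (AddSubgroup.add_mem _
          (AddSubgroup.add_mem _ (AddSubgroup.zsmul_mem _ hv3 _)
            (AddSubgroup.zsmul_mem _ hv5 _))
          (AddSubgroup.zsmul_mem _ hv6 _))
        (AddSubgroup.zsmul_mem _ hv2 _)
  have hsurj : Function.Surjective phiX31 := by
    intro n
    exact ⟨![0,n,0,0,0], by simp [phiX31]⟩
  exact ⟨(QuotientAddGroup.quotientAddEquivOfEq hker).trans
    (QuotientAddGroup.quotientKerEquivOfSurjective phiX31 hsurj)⟩
end

section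
/- On ℝ⁵ consider the bilinear pairing B(x, y) = x₀y₀ − Σ_{i=1}^4 x_i y_i. Let C ⊆ ℝ⁵ be the convex cone generated by the nine vectors (1,−1,0,0,0), (1,−1,−1,0,0), (1,−1,0,−1,0), (1,−1,0,0,−1), (1,−1,−1,−1,0), (1,−1,−1,0,−1), (1,−1,0,−1,−1), (1,−1,−1,−1,−1) and (1,−2,0,0,0). Then the dual cone { y ∈ ℝ⁵ : B(x, y) ≥ 0 for all x ∈ C } is the convex cone generated by the seven vectors (−1,1,0,0,0), (0,0,1,0,0), (0,0,0,1,0), (0,0,0,0,1), (2,−1,−1,0,0), (2,−1,0,−1,0) and (2,−1,0,0,−1). -/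
private lemma sum_univ_nine' {M : Type*} [AddCommMonoid M] (f : Fin 9 → M) :
    ∑ i, f i = f 0 + f 1 + f 2 + f 3 + f 4 + f 5 + f 6 + f 7 + f 8 := by
  rw [Fin.sum_univ_castSucc, Fin.sum_univ_eight]; rfl

/-- Duality computation in the proof of Proposition 5.5 for type `X_{43}`:
with respect to the pairing `B(x,y) = x₀y₀ − Σ_{i=1}^4 x_iy_i` on `ℝ⁵`, the
dual of the cone generated by the nine listed curve classes is the cone
generated by the seven listed divisor classes (the chamber `N₁`). -/
theorem dual_cone_N1_X43
    (g : Fin 9 → Fin 5 → ℝ)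
    (hg : g = ![![1,-1,0,0,0], ![1,-1,-1,0,0], ![1,-1,0,-1,0], ![1,-1,0,0,-1],
      ![1,-1,-1,-1,0], ![1,-1,-1,0,-1], ![1,-1,0,-1,-1], ![1,-1,-1,-1,-1],
      ![1,-2,0,0,0]])
    (w : Fin 7 → Fin 5 → ℝ)
    (hw : w = ![![-1,1,0,0,0], ![0,0,1,0,0], ![0,0,0,1,0], ![0,0,0,0,1],
      ![2,-1,-1,0,0], ![2,-1,0,-1,0], ![2,-1,0,0,-1]])
    (B : (Fin 5 → ℝ) → (Fin 5 → ℝ) → ℝ)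
    (hB : ∀ x y, B x y = x 0 * y 0 - ∑ i : Fin 4, x i.succ * y i.succ)
    (C : Set (Fin 5 → ℝ))
    (hC : C = {x | ∃ c : Fin 9 → ℝ, (∀ i, 0 ≤ c i) ∧ x = ∑ i, c i • g i}) :
    {y | ∀ x ∈ C, 0 ≤ B x y}
      = {y | ∃ c : Fin 7 → ℝ, (∀ i, 0 ≤ c i) ∧ y = ∑ i, c i • w i} := by
  have e0 : g 0 = ![1,-1,0,0,0] := by rw [hg]; rfl
  have e1 : g 1 = ![1,-1,-1,0,0] := by rw [hg]; rfl
  have e2 : g 2 = ![1,-1,0,-1,0] := by rw [hg]; rfl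
  have e3 : g 3 = ![1,-1,0,0,-1] := by rw [hg]; rfl
  have e4 : g 4 = ![1,-1,-1,-1,0] := by rw [hg]; rfl
  have e5 : g 5 = ![1,-1,-1,0,-1] := by rw [hg]; rfl
  have e6 : g 6 = ![1,-1,0,-1,-1] := by rw [hg]; rfl
  have e7 : g 7 = ![1,-1,-1,-1,-1] := by rw [hg]; rfl
  have e8 : g 8 = ![1,-2,0,0,0] := by rw [hg]; rfl
  have f0 : w 0 = ![-1,1,0,0,0] := by rw [hw]; rfl
  have f1 : w 1 = ![0,0,1,0,0] := by rw [hw]; rfl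
  have f2 : w 2 = ![0,0,0,1,0] := by rw [hw]; rfl
  have f3 : w 3 = ![0,0,0,0,1] := by rw [hw]; rfl
  have f4 : w 4 = ![2,-1,-1,0,0] := by rw [hw]; rfl
  have f5 : w 5 = ![2,-1,0,-1,0] := by rw [hw]; rfl
  have f6 : w 6 = ![2,-1,0,0,-1] := by rw [hw]; rfl
  ext y
  simp only [Set.mem_setOf_eq]
  constructor
  · intro h
    have key : ∀ i : Fin 9, 0 ≤ B (g i) y := by
      intro i
      refine h (g i) ?_
      rw [hC]
      exact ⟨fun j => if j = i then 1 else 0,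
        fun j => by dsimp only; split <;> norm_num,
        by simp [ite_smul]⟩
    have H0 := key 0; have H1 := key 1; have H2 := key 2; have H3 := key 3
    have H4 := key 4; have H5 := key 5; have H6 := key 6; have H7 := key 7
    have H8 := key 8
    rw [e0, hB] at H0; rw [e1, hB] at H1; rw [e2, hB] at H2; rw [e3, hB] at H3
    rw [e4, hB] at H4; rw [e5, hB] at H5; rw [e6, hB] at H6; rw [e7, hB] at H7
    rw [e8, hB] at H8
    simp only [Fin.sum_univ_four, show Fin.succ 0 = (1:Fin 5) from rfl,
      show Fin.succ 1 = (2:Fin 5) from rfl, show Fin.succ 2 = (3:Fin 5) from rfl,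
      show Fin.succ 3 = (4:Fin 5) from rfl, Matrix.cons_val_zero, Matrix.cons_val_one,
      Matrix.head_cons, Matrix.cons_val_two, Matrix.cons_val_three, Matrix.cons_val_four,
      Matrix.vecHead, Matrix.vecTail, Matrix.cons_val_succ, Function.comp_apply]
      at H0 H1 H2 H3 H4 H5 H6 H7 H8
    set m2 := max 0 (-(y 2)) with hm2def
    set m3 := max 0 (-(y 3)) with hm3def
    set m4 := max 0 (-(y 4)) with hm4def
    have hm2a : 0 ≤ m2 := le_max_left _ _
    have hm2b : -(y 2) ≤ m2 := le_max_right _ _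
    have hm3a : 0 ≤ m3 := le_max_left _ _
    have hm3b : -(y 3) ≤ m3 := le_max_right _ _
    have hm4a : 0 ≤ m4 := le_max_left _ _
    have hm4b : -(y 4) ≤ m4 := le_max_right _ _
    have hM : m2 + m3 + m4 ≤ y 0 + y 1 := by
      rcases max_cases 0 (-(y 2)) with ⟨q2, _⟩ | ⟨q2, _⟩ <;>
      rcases max_cases 0 (-(y 3)) with ⟨q3, _⟩ | ⟨q3, _⟩ <;>
      rcases max_cases 0 (-(y 4)) with ⟨q4, _⟩ | ⟨q4, _⟩ <;>
      rw [← hm2def] at q2 <;> rw [← hm3def] at q3 <;> rw [← hm4def] at q4 <;>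
      linarith
    refine ⟨![y 0 + 2 * y 1,
              y 2 + m2 + (y 0 + y 1 - (m2 + m3 + m4)),
              y 3 + m3, y 4 + m4,
              m2 + (y 0 + y 1 - (m2 + m3 + m4)), m3, m4], ?_, ?_⟩
    · intro i
      fin_cases i
      · show (0:ℝ) ≤ y 0 + 2 * y 1; linarith
      · show (0:ℝ) ≤ y 2 + m2 + (y 0 + y 1 - (m2 + m3 + m4)); linarith
      · show (0:ℝ) ≤ y 3 + m3; linarith
      · show (0:ℝ) ≤ y 4 + m4; linarith
      · show (0:ℝ) ≤ m2 + (y 0 + y 1 - (m2 + m3 + m4)); linarith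
      · show (0:ℝ) ≤ m3; linarith
      · show (0:ℝ) ≤ m4; linarith
    · funext k
      rw [Finset.sum_apply, Fin.sum_univ_seven]
      simp only [Pi.smul_apply, smul_eq_mul, f0, f1, f2, f3, f4, f5, f6]
      fin_cases k <;>
        simp only [Matrix.cons_val_zero, Matrix.cons_val_one, Matrix.head_cons,
          Matrix.cons_val_two, Matrix.cons_val_three, Matrix.cons_val_four,
          Matrix.vecHead, Matrix.vecTail, Matrix.cons_val_succ, Function.comp_apply,
          show (5:Fin 7) = Fin.succ 4 from rfl, show (6:Fin 7) = Fin.succ 5 from rfl,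
          show (5:Fin 6) = Fin.succ 4 from rfl,
          show (⟨2, by norm_num⟩ : Fin 5) = 2 from rfl,
          show (⟨3, by norm_num⟩ : Fin 5) = 3 from rfl,
          show (⟨4, by norm_num⟩ : Fin 5) = 4 from rfl,
          Fin.mk_zero, Fin.mk_one] <;>
        ring
  · rintro ⟨c, hc, rfl⟩ x hx
    rw [hC] at hx
    obtain ⟨b, hb, rfl⟩ := hx
    rw [hB]
    simp only [Finset.sum_apply, Pi.smul_apply, smul_eq_mul, Fin.sum_univ_four,
      sum_univ_nine', Fin.sum_univ_seven,
      show Fin.succ 0 = (1:Fin 5) from rfl, show Fin.succ 1 = (2:Fin 5) from rfl,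
      show Fin.succ 2 = (3:Fin 5) from rfl, show Fin.succ 3 = (4:Fin 5) from rfl,
      e0, e1, e2, e3, e4, e5, e6, e7, e8, f0, f1, f2, f3, f4, f5, f6,
      Matrix.cons_val_zero, Matrix.cons_val_one, Matrix.head_cons,
      Matrix.cons_val_two, Matrix.cons_val_three, Matrix.cons_val_four,
      Matrix.vecHead, Matrix.vecTail, Matrix.cons_val_succ, Function.comp_apply]
    linarith [mul_nonneg (hb 0) (hc 4), mul_nonneg (hb 0) (hc 5), mul_nonneg (hb 0) (hc 6),
      mul_nonneg (hb 1) (hc 1), mul_nonneg (hb 1) (hc 5), mul_nonneg (hb 1) (hc 6),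
      mul_nonneg (hb 2) (hc 2), mul_nonneg (hb 2) (hc 4), mul_nonneg (hb 2) (hc 6),
      mul_nonneg (hb 3) (hc 3), mul_nonneg (hb 3) (hc 4), mul_nonneg (hb 3) (hc 5),
      mul_nonneg (hb 4) (hc 1), mul_nonneg (hb 4) (hc 2), mul_nonneg (hb 4) (hc 6),
      mul_nonneg (hb 5) (hc 1), mul_nonneg (hb 5) (hc 3), mul_nonneg (hb 5) (hc 5),
      mul_nonneg (hb 6) (hc 2), mul_nonneg (hb 6) (hc 3), mul_nonneg (hb 6) (hc 4),
      mul_nonneg (hb 7) (hc 1), mul_nonneg (hb 7) (hc 2), mul_nonneg (hb 7) (hc 3),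
      mul_nonneg (hb 8) (hc 0)]
end

section
/- For each integer k, let C_k ⊆ ℝ³ be the closed convex cone generated by the four vectors (1,0,0), (k²+k+1, k+1, 1), (k²−k+1, k, 1) and (2k²+1, 2k+1, 2). Then the union ⋃_{k∈ℤ} C_k is a convex cone. In particular, for every integer k the identities (k+1)² − (k+1) + 1 = k² + k + 1 (so that C_k and C_{k+1} share the two-dimensional face spanned by (1,0,0) and (k²+k+1, k+1, 1)) and (2k²+1, 2k+1, 2) + (2(k+1)²+1, 2(k+1)+1, 2) = 4·(k²+k+1, k+1, 1) hold. -/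
set_option linter.unnecessarySeqFocus false

/-- The halfspace description of the moving cone. -/
def Smov : Set (Fin 3 → ℝ) :=
  {x | 0 ≤ x 2 ∧ ∀ m : ℤ, (2*(m:ℝ)+1) * x 1 - ((m:ℝ)^2+2*m) * x 2 ≤ x 0}




/-- For `k ∈ ℤ` let `C_k ⊆ ℝ³` be the convex cone generated by `(1,0,0)`,
`(k²+k+1, k+1, 1)`, `(k²−k+1, k, 1)` and `(2k²+1, 2k+1, 2)` (the chamber
`σ^k(Nef(X))` for the degree-two type `X_{11}`).  Then `⋃_{k∈ℤ} C_k` is a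
convex cone, and for every `k` the identities
`(k+1)² − (k+1) + 1 = k² + k + 1` and
`(2k²+1, 2k+1, 2) + (2(k+1)²+1, 2(k+1)+1, 2) = 4·(k²+k+1, k+1, 1)` hold, so
adjacent chambers share the face spanned by `(1,0,0)` and `(k²+k+1, k+1, 1)`.
(Section 5.2: `Mov(X) = ⋃_{k∈ℤ} σ^k(Nef(X))`.) -/
theorem union_nef_chambers_convex (C : ℤ → Set (Fin 3 → ℝ))
    (hC : ∀ k : ℤ, C k = {x | ∃ c : Fin 4 → ℝ, (∀ i, 0 ≤ c i) ∧
      x = ∑ i, c i • ![(![1,0,0] : Fin 3 → ℝ),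
        ![(k:ℝ)^2+k+1, (k:ℝ)+1, 1],
        ![(k:ℝ)^2-k+1, (k:ℝ), 1],
        ![2*(k:ℝ)^2+1, 2*(k:ℝ)+1, 2]] i}) :
    Convex ℝ (⋃ k : ℤ, C k) ∧
    (∀ r : ℝ, 0 ≤ r → ∀ x ∈ ⋃ k : ℤ, C k, r • x ∈ ⋃ k : ℤ, C k) ∧
    (∀ k : ℤ, ((k:ℝ)+1)^2 - ((k:ℝ)+1) + 1 = (k:ℝ)^2 + k + 1) ∧
    (∀ k : ℤ, (![2*(k:ℝ)^2+1, 2*(k:ℝ)+1, 2] : Fin 3 → ℝ)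
        + ![2*((k:ℝ)+1)^2+1, 2*((k:ℝ)+1)+1, 2]
        = (4:ℝ) • ![(k:ℝ)^2+k+1, (k:ℝ)+1, 1]) := by

  -- componentwise characterization of membership in `C k`
  have hmem : ∀ (k : ℤ) (x : Fin 3 → ℝ), x ∈ C k ↔ ∃ c : Fin 4 → ℝ, (∀ i, 0 ≤ c i) ∧
      x 0 = c 0 + c 1 * ((k:ℝ)^2+k+1) + c 2 * ((k:ℝ)^2-k+1) + c 3 * (2*(k:ℝ)^2+1) ∧
      x 1 = c 1 * ((k:ℝ)+1) + c 2 * k + c 3 * (2*(k:ℝ)+1) ∧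
      x 2 = c 1 + c 2 + 2 * c 3 := by
    intro k x
    rw [hC k]
    constructor
    · rintro ⟨c, hc, hx⟩
      exact ⟨c, hc, by rw [hx]; simp [Fin.sum_univ_four]; try ring,
        by rw [hx]; simp [Fin.sum_univ_four]; try ring,
        by rw [hx]; simp [Fin.sum_univ_four]; try ring⟩
    · rintro ⟨c, hc, h0, h1, h2⟩
      refine ⟨c, hc, ?_⟩
      funext j
      fin_cases j
      · simp [Fin.sum_univ_four]; linarith [h0]
      · simp [Fin.sum_univ_four]; linarith [h1]
      · simp [Fin.sum_univ_four]; linarith [h2]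
  -- each chamber is contained in Smov
  have hsub1 : ∀ k : ℤ, C k ⊆ Smov := by
    intro k x hx
    obtain ⟨c, hc, h0, h1, h2⟩ := (hmem k x).1 hx
    constructor
    · rw [h2]; linarith [hc 1, hc 2, hc 3]
    · intro m
      have hprodZ : 0 ≤ (k - m) * (k - m - 1) := by
        rcases le_or_gt (k - m) 0 with h | h
        · have h' : k - m - 1 ≤ 0 := by linarith
          nlinarith
        · exact mul_nonneg (by linarith) (by linarith)
      have hprod : (0:ℝ) ≤ ((k - m : ℤ) : ℝ) * ((k - m - 1 : ℤ) : ℝ) := by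
        exact_mod_cast hprodZ
      push_cast at hprod
      have key : x 0 - ((2*(m:ℝ)+1) * x 1 - ((m:ℝ)^2+2*m) * x 2)
          = c 0 + c 1 * ((k:ℝ)-m)^2 + c 2 * ((k:ℝ)-1-m)^2
            + 2 * (c 3 * (((k:ℝ)-m) * ((k:ℝ)-m-1))) := by
        rw [h0, h1, h2]; ring
      nlinarith [hc 0, mul_nonneg (hc 1) (sq_nonneg ((k:ℝ)-m)),
        mul_nonneg (hc 2) (sq_nonneg ((k:ℝ)-1-m)), mul_nonneg (hc 3) hprod]
  -- Smov is contained in the union of chambers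
  have hsub2 : Smov ⊆ ⋃ k : ℤ, C k := by
    rintro x ⟨hz, h⟩
    set X := x 0 with hX
    set Y := x 1 with hY
    set Z := x 2 with hZdef
    rcases eq_or_lt_of_le hz with hz0 | hzpos
    · -- Z = 0 : then Y = 0 and X ≥ 0, x ∈ C 0
      have h' : ∀ m : ℤ, (2*(m:ℝ)+1) * Y ≤ X := by
        intro m; have hm := h m; rw [← hz0] at hm; linarith [hm]
      have hY0 : Y = 0 := by
        rcases lt_trichotomy Y 0 with hy | hy | hy
        · obtain ⟨m, hm⟩ := exists_int_lt ((X - Y)/(2*Y))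
          have h2Y : 2*Y < 0 := by linarith
          rw [lt_div_iff_of_neg h2Y] at hm
          have := h' m; nlinarith
        · exact hy
        · obtain ⟨m, hm⟩ := exists_int_gt ((X - Y)/(2*Y))
          have h2Y : 0 < 2*Y := by linarith
          rw [div_lt_iff₀ h2Y] at hm
          have := h' m; nlinarith
      have hX0 : 0 ≤ X := by have := h' 0; push_cast at this; linarith
      refine Set.mem_iUnion.2 ⟨0, (hmem 0 x).2 ⟨![X, 0, 0, 0], ?_, ?_, ?_, ?_⟩⟩
      · intro i; fin_cases i <;> simp [hX0]
      · simp [← hX]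
      · simp [← hY, hY0]
      · simp [← hZdef, ← hz0]
    · -- Z > 0 : take k = ⌊Y/Z⌋
      set k : ℤ := ⌊Y / Z⌋ with hk
      have hk1 : (k:ℝ) * Z ≤ Y := by
        have h1 := Int.floor_le (Y / Z)
        rw [← hk] at h1
        calc (k:ℝ) * Z ≤ (Y/Z) * Z := by nlinarith
        _ = Y := by field_simp
      have hk2 : Y ≤ ((k:ℝ)+1) * Z := by
        have h1 := (Int.lt_floor_add_one (Y / Z)).le
        rw [← hk] at h1
        calc Y = (Y/Z) * Z := by field_simp
        _ ≤ ((k:ℝ)+1) * Z := by nlinarith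
      have hhk : (2*(k:ℝ)+1) * Y - ((k:ℝ)^2+2*k) * Z ≤ X := h k
      have hhk' : (2*(k:ℝ)-1) * Y - ((k:ℝ)^2-1) * Z ≤ X := by
        have h1 := h (k-1); push_cast at h1; linarith [h1]
      rcases le_total (2*Y) ((2*(k:ℝ)+1) * Z) with hcase | hcase
      · -- lower half: cone(e, v_k, w_k)
        refine Set.mem_iUnion.2 ⟨k, (hmem k x).2
          ⟨![X - (2*(k:ℝ)-1)*Y + ((k:ℝ)^2-1)*Z, 0, (2*(k:ℝ)+1)*Z - 2*Y, Y - (k:ℝ)*Z],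
            ?_, ?_, ?_, ?_⟩⟩
        · intro i; fin_cases i <;> simp <;> linarith
        · simp [← hX, ← hY, ← hZdef]; ring
        · simp [← hY, ← hZdef]; ring
        · simp [← hY, ← hZdef]; ring
      · -- upper half: cone(e, u_k, w_k)
        refine Set.mem_iUnion.2 ⟨k, (hmem k x).2
          ⟨![X - (2*(k:ℝ)+1)*Y + ((k:ℝ)^2+2*k)*Z, 2*Y - (2*(k:ℝ)+1)*Z, 0, ((k:ℝ)+1)*Z - Y],
            ?_, ?_, ?_, ?_⟩⟩
        · intro i; fin_cases i <;> simp <;> linarith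
        · simp [← hX, ← hY, ← hZdef]; ring
        · simp [← hY, ← hZdef]; ring
        · simp [← hY, ← hZdef]; ring
  refine ⟨?_, ?_, ?_, ?_⟩
  · -- convexity
    intro x hx y hy a b ha hb hab
    apply hsub2
    simp only [Set.mem_iUnion] at hx hy
    obtain ⟨kx, hx⟩ := hx
    obtain ⟨ky, hy⟩ := hy
    obtain ⟨hx2, hx1⟩ := hsub1 kx hx
    obtain ⟨hy2, hy1⟩ := hsub1 ky hy
    constructor
    · simp only [Pi.add_apply, Pi.smul_apply, smul_eq_mul]
      nlinarith
    · intro m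
      have h1 := hx1 m
      have h2 := hy1 m
      simp only [Pi.add_apply, Pi.smul_apply, smul_eq_mul]
      nlinarith [mul_le_mul_of_nonneg_left h1 ha, mul_le_mul_of_nonneg_left h2 hb]
  · -- scaling
    intro r hr x hx
    simp only [Set.mem_iUnion] at hx ⊢
    obtain ⟨k, hx⟩ := hx
    obtain ⟨c, hc, h0, h1, h2⟩ := (hmem k x).1 hx
    refine ⟨k, (hmem k (r • x)).2 ⟨fun i => r * c i, fun i =>
      mul_nonneg hr (hc i), ?_, ?_, ?_⟩⟩
    · simp only [Pi.smul_apply, smul_eq_mul]; rw [h0]; ring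
    · simp only [Pi.smul_apply, smul_eq_mul]; rw [h1]; ring
    · simp only [Pi.smul_apply, smul_eq_mul]; rw [h2]; ring
  · intro k; ring
  · intro k
    funext j
    fin_cases j <;> simp <;> ring
end
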